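/- For a random variable X with BSN(α,β) density, E[ln(1-Φ(X))] = -(1/B(α,β)) Σ_{n=1}^∞ B(n+α,β)/n, i.e., ∫_ℝ f(x)·ln(1-Φ(x)) dx = -(1/B(α,β)) Σ_{n≥1} B(n+α,β)/n. -/

import Mathlib

open Real Filter Set MeasureTheory Topology

noncomputable def phi (z : ℝ) : ℝ := Real.exp (-z^2/2) / Real.sqrt (2*Real.pi)
noncomputable def Phi (z : ℝ) : ℝ := ∫ t in Set.Iic z, phi t
noncomputable def betaF (a b : ℝ) : ℝ := ∫ w in (0:ℝ)..1, w^(a-1) * (1-w)^(b-1)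
noncomputable def bsn (a b z : ℝ) : ℝ := phi z * Phi z ^ (a-1) * (1 - Phi z) ^ (b-1) / betaF a b

lemma phi_pos (z : ℝ) : 0 < phi z := by
  unfold phi; positivity

lemma phi_cont : Continuous phi := by
  unfold phi; fun_prop

lemma phi_integrable : Integrable phi := by
  have h : Integrable (fun x : ℝ => Real.exp (-(1/2) * x^2)) :=
    integrable_exp_neg_mul_sq (by norm_num)
  have := h.div_const (Real.sqrt (2*Real.pi))
  convert this using 2 with x
  unfold phi; ring_nf

lemma integral_phi : ∫ x, phi x = 1 := by
  unfold phi
  rw [integral_div]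
  have h : ∫ x : ℝ, Real.exp (-x^2/2) = Real.sqrt (2*Real.pi) := by
    have h2 := integral_gaussian (1/2 : ℝ)
    rw [show (fun x : ℝ => Real.exp (-x^2/2)) = fun x : ℝ => Real.exp (-(1/2) * x^2) by
      funext x; ring_nf]
    rw [h2]
    norm_num
    exact mul_comm _ _
  rw [h, div_self (by positivity)]

lemma Phi_sub (x y : ℝ) : Phi y - Phi x = ∫ t in x..y, phi t := by
  unfold Phi
  exact intervalIntegral.integral_Iic_sub_Iic
    (phi_integrable.integrableOn : IntegrableOn phi (Set.Iic x) volume)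
    (phi_integrable.integrableOn : IntegrableOn phi (Set.Iic y) volume)

lemma Phi_hasDerivAt (x : ℝ) : HasDerivAt Phi (phi x) x := by
  have h : HasDerivAt (fun y => (∫ t in (0:ℝ)..y, phi t) + Phi 0) (phi x) x := by
    refine HasDerivAt.add_const _ ?_
    exact intervalIntegral.integral_hasDerivAt_right
      phi_integrable.intervalIntegrable
      phi_cont.aestronglyMeasurable.stronglyMeasurableAtFilter
      phi_cont.continuousAt
  convert h using 1
  funext y
  have := Phi_sub 0 y
  linarith

lemma Phi_cont : Continuous Phi :=
  continuous_iff_continuousAt.2 fun x => (Phi_hasDerivAt x).continuousAt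

lemma Phi_strictMono : StrictMono Phi := by
  intro x y hxy
  have h : 0 < ∫ t in x..y, phi t :=
    intervalIntegral.intervalIntegral_pos_of_pos_on
      phi_integrable.intervalIntegrable (fun t _ => phi_pos t) hxy
  have := Phi_sub x y
  linarith

lemma Phi_nonneg (x : ℝ) : 0 ≤ Phi x :=
  setIntegral_nonneg measurableSet_Iic fun t _ => (phi_pos t).le

lemma Phi_le_one (x : ℝ) : Phi x ≤ 1 := by
  rw [← integral_phi]
  exact setIntegral_le_integral phi_integrable
    (Filter.Eventually.of_forall fun t => (phi_pos t).le)

lemma Phi_pos (x : ℝ) : 0 < Phi x :=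
  lt_of_le_of_lt (Phi_nonneg (x-1)) (Phi_strictMono (by linarith))

lemma Phi_lt_one (x : ℝ) : Phi x < 1 :=
  lt_of_lt_of_le (Phi_strictMono (show x < x+1 by linarith)) (Phi_le_one (x+1))

lemma Phi_tendsto_atTop : Tendsto Phi atTop (𝓝 1) := by
  have h := tendsto_setIntegral_of_monotone (μ := volume) (f := phi)
    (s := fun x : ℝ => Set.Iic x) (fun i => measurableSet_Iic)
    (fun i j hij => Set.Iic_subset_Iic.2 hij)
    (by rw [Set.iUnion_Iic]; exact phi_integrable.integrableOn)
  rw [Set.iUnion_Iic] at h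
  simp only [setIntegral_univ, integral_phi] at h; exact h

lemma Phi_tendsto_atBot : Tendsto Phi atBot (𝓝 0) := by
  have h := tendsto_setIntegral_of_antitone (μ := volume) (f := phi)
    (s := fun x : ℝ => Set.Iic (-x)) (fun i => measurableSet_Iic)
    (fun i j hij => Set.Iic_subset_Iic.2 (by linarith))
    ⟨0, phi_integrable.integrableOn⟩
  have hempty : ⋂ x : ℝ, Set.Iic (-x) = ∅ := by
    ext t
    simp only [Set.mem_iInter, Set.mem_Iic, Set.mem_empty_iff_false, iff_false, not_forall]
    exact ⟨-(t-1), by push_neg; linarith⟩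
  rw [hempty] at h
  simp only [setIntegral_empty] at h
  have : Tendsto (fun x : ℝ => Phi (-x)) atTop (𝓝 0) := h
  have h2 := this.comp tendsto_neg_atBot_atTop
  have he : ((fun x : ℝ => Phi (-x)) ∘ Neg.neg) = Phi := by funext x; simp
  rwa [he] at h2

lemma Phi_range : Set.range Phi = Set.Ioo 0 1 := by
  apply Set.Subset.antisymm
  · rintro _ ⟨x, rfl⟩
    exact ⟨Phi_pos x, Phi_lt_one x⟩
  · rintro y ⟨hy0, hy1⟩
    have h1 : ∀ᶠ x in atBot, Phi x < y := Phi_tendsto_atBot.eventually (eventually_lt_nhds hy0)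
    have h2 : ∀ᶠ x in atTop, y < Phi x := Phi_tendsto_atTop.eventually (eventually_gt_nhds hy1)
    obtain ⟨x₁, hx₁⟩ := h1.exists
    obtain ⟨x₂, hx₂⟩ := h2.exists
    have hle : x₁ ≤ x₂ := by
      by_contra hcon
      push_neg at hcon
      exact absurd (Phi_strictMono hcon) (by linarith)
    have := intermediate_value_Icc hle Phi_cont.continuousOn
    obtain ⟨x, _, hx⟩ := this ⟨hx₁.le, hx₂.le⟩
    exact ⟨x, hx⟩

lemma beta_integrableOn {c d : ℝ} (hc : 0 < c) (hd : 0 < d) :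
    IntegrableOn (fun w : ℝ => w^(c-1) * (1-w)^(d-1)) (Set.Ioo 0 1) := by
  have hC : IntervalIntegrable
      (fun x : ℝ => (x:ℂ)^((c:ℂ)-1) * (1-(x:ℂ))^((d:ℂ)-1)) volume 0 1 :=
    Complex.betaIntegral_convergent (by simpa using hc) (by simpa using hd)
  have hCI : IntegrableOn
      (fun x : ℝ => (x:ℂ)^((c:ℂ)-1) * (1-(x:ℂ))^((d:ℂ)-1)) (Set.Ioo 0 1) := by
    have := (intervalIntegrable_iff_integrableOn_Ioo_of_le (by norm_num : (0:ℝ) ≤ 1)).1 hC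
    exact this
  have hre := hCI.re
  apply hre.congr
  refine (ae_restrict_iff' measurableSet_Ioo).2 (Filter.Eventually.of_forall fun x hx => ?_)
  have h1 : (Complex.ofReal (x^(c-1))) = (x:ℂ)^((c:ℂ)-1) := by
    rw [Complex.ofReal_cpow hx.1.le]
    norm_num
  have h2 : (Complex.ofReal ((1-x)^(d-1))) = (1-(x:ℂ))^((d:ℂ)-1) := by
    rw [Complex.ofReal_cpow (by linarith [hx.2] : (0:ℝ) ≤ 1 - x)]
    norm_num
  have : ((x:ℂ)^((c:ℂ)-1) * (1-(x:ℂ))^((d:ℂ)-1)) = Complex.ofReal (x^(c-1) * (1-x)^(d-1)) := by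
    rw [← h1, ← h2]
    push_cast
    ring
  simp only [this, Complex.ofReal_re]
  norm_num

lemma betaF_eq (c d : ℝ) : betaF c d = ∫ w in Set.Ioo (0:ℝ) 1, w^(c-1) * (1-w)^(d-1) := by
  unfold betaF
  rw [intervalIntegral.integral_of_le (by norm_num : (0:ℝ) ≤ 1),
    integral_Ioc_eq_integral_Ioo]

lemma neg_log_le_aux {b w : ℝ} (hb : 0 < b) (hw0 : 0 < w) (hw1 : w < 1) :
    -Real.log (1-w) ≤ (2/b) * (1-w)^(-(b/2)) := by
  set t := 1 - w with ht
  have ht0 : 0 < t := by simp [ht]; linarith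
  have hlog : Real.log (t^(-(b/2))) = (-(b/2)) * Real.log t := Real.log_rpow ht0 _
  have hle : Real.log (t^(-(b/2))) ≤ t^(-(b/2)) := by
    have := Real.log_le_sub_one_of_pos (Real.rpow_pos_of_pos ht0 (-(b/2)))
    linarith
  have hb' : 0 < 2/b := by positivity
  calc -Real.log t = (2/b) * Real.log (t^(-(b/2))) := by
        rw [hlog]; field_simp
    _ ≤ (2/b) * t^(-(b/2)) := by
        exact mul_le_mul_of_nonneg_left hle hb'.le

lemma key_integral (a b : ℝ) (ha : 0 < a) (hb : 0 < b) :
    ∫ w in Set.Ioo (0:ℝ) 1, w^(a-1) * (1-w)^(b-1) * Real.log (1-w)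
      = -∑' n : ℕ, betaF ((n:ℝ)+1+a) b / ((n:ℝ)+1) := by
  set μ := volume.restrict (Set.Ioo (0:ℝ) 1) with hμ
  set f : ℕ → ℝ → ℝ := fun n w => w^((n:ℝ)+1+a-1) * (1-w)^(b-1) / ((n:ℝ)+1) with hf
  -- measurability
  have hconton : ∀ c d : ℝ, ContinuousOn (fun w : ℝ => w^(c-1) * (1-w)^(d-1)) (Set.Ioo 0 1) := by
    intro c d
    intro w hw
    apply ContinuousAt.continuousWithinAt
    apply ContinuousAt.mul
    · exact Real.continuousAt_rpow_const _ _ (Or.inl hw.1.ne')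
    · exact ContinuousAt.comp' (Real.continuousAt_rpow_const _ _ (Or.inl (by simp; linarith [hw.2])))
        (by fun_prop)
  have hmeas : ∀ n : ℕ, AEStronglyMeasurable (f n) μ := by
    intro n
    rw [hμ, hf]
    exact (((hconton ((n:ℝ)+1+a) b).div_const _).aestronglyMeasurable measurableSet_Ioo)
  -- pointwise hasSum
  have hsum : ∀ w ∈ Set.Ioo (0:ℝ) 1,
      HasSum (fun n => f n w) (w^(a-1) * (1-w)^(b-1) * (-Real.log (1-w))) := by
    intro w hw
    have habs : |w| < 1 := by rw [abs_of_pos hw.1]; exact hw.2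
    have h := (hasSum_pow_div_log_of_abs_lt_one habs).mul_left (w^(a-1) * (1-w)^(b-1))
    suffices hfun : (fun n => f n w) = fun i : ℕ => w ^ (a - 1) * (1 - w) ^ (b - 1) * (w ^ (i + 1) / ((i:ℝ) + 1)) by rw [hfun]; exact h
    funext n
    have h1 : w ^ (n+1 : ℕ) = w ^ ((n:ℝ)+1) := by
      rw [← Real.rpow_natCast w (n+1)]; push_cast; ring_nf
    have h2 : w^((n:ℝ)+1+a-1) = w^(a-1) * w^((n:ℝ)+1) := by
      rw [← Real.rpow_add hw.1]; ring_nf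
    rw [hf]
    simp only
    rw [h2, h1]
    ring
  -- value of each integral
  have hint : ∀ n : ℕ, ∫ w, f n w ∂μ = betaF ((n:ℝ)+1+a) b / ((n:ℝ)+1) := by
    intro n
    rw [hμ, hf]
    simp only
    rw [integral_div, betaF_eq]
  -- the dominating function
  set G : ℝ → ℝ := fun w => (2/b) * (w^(a-1) * (1-w)^(b/2-1)) with hG
  have hGint : Integrable G μ := (beta_integrableOn ha (by positivity)).const_mul _
  have hFG : ∀ w ∈ Set.Ioo (0:ℝ) 1,
      w^(a-1) * (1-w)^(b-1) * (-Real.log (1-w)) ≤ G w := by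
    intro w hw
    have h1 : -Real.log (1-w) ≤ (2/b) * (1-w)^(-(b/2)) := neg_log_le_aux hb hw.1 hw.2
    have hw1 : (0:ℝ) < 1 - w := by linarith [hw.2]
    have h2 : (1-w)^(b-1) * (1-w)^(-(b/2)) = (1-w)^(b/2-1) := by
      rw [← Real.rpow_add hw1]; ring_nf
    have h3 : 0 ≤ w^(a-1) * (1-w)^(b-1) := by
      have := Real.rpow_nonneg hw.1.le (a-1)
      have := Real.rpow_nonneg hw1.le (b-1)
      positivity
    calc w^(a-1) * (1-w)^(b-1) * (-Real.log (1-w))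
        ≤ w^(a-1) * (1-w)^(b-1) * ((2/b) * (1-w)^(-(b/2))) :=
          mul_le_mul_of_nonneg_left h1 h3
      _ = G w := by rw [hG]; simp only; rw [← h2]; ring
  -- nonnegativity of f n on Ioo
  have hfnn : ∀ n : ℕ, ∀ w ∈ Set.Ioo (0:ℝ) 1, 0 ≤ f n w := by
    intro n w hw
    have h1 := Real.rpow_nonneg hw.1.le ((n:ℝ)+1+a-1)
    have h2 := Real.rpow_nonneg (by linarith [hw.2] : (0:ℝ) ≤ 1-w) (b-1)
    have : (0:ℝ) < (n:ℝ)+1 := by positivity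
    rw [hf]
    positivity
  -- summability of lintegrals
  have hlin : ∑' n : ℕ, ∫⁻ w, ‖f n w‖₊ ∂μ ≠ ⊤ := by
    have e1 : ∀ n : ℕ, ∫⁻ w, ‖f n w‖₊ ∂μ = ∫⁻ w, ENNReal.ofReal (f n w) ∂μ := by
      intro n
      refine lintegral_congr_ae ?_
      rw [hμ]
      refine (ae_restrict_iff' measurableSet_Ioo).2 (Filter.Eventually.of_forall fun w hw => ?_)
      exact Real.enorm_eq_ofReal (hfnn n w hw)
    have e2 : ∑' n : ℕ, ∫⁻ w, ENNReal.ofReal (f n w) ∂μ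
        = ∫⁻ w, ∑' n : ℕ, ENNReal.ofReal (f n w) ∂μ :=
      (lintegral_tsum fun n => (ENNReal.measurable_ofReal.comp_aemeasurable
        (hmeas n).aemeasurable)).symm
    have e3 : ∫⁻ w, ∑' n : ℕ, ENNReal.ofReal (f n w) ∂μ ≤ ∫⁻ w, ENNReal.ofReal (G w) ∂μ := by
      refine lintegral_mono_ae ?_
      rw [hμ]
      refine (ae_restrict_iff' measurableSet_Ioo).2 (Filter.Eventually.of_forall fun w hw => ?_)
      have hs := hsum w hw
      rw [← ENNReal.ofReal_tsum_of_nonneg (hfnn · w hw) hs.summable, hs.tsum_eq]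
      exact ENNReal.ofReal_le_ofReal (hFG w hw)
    have e4 : ∫⁻ w, ENNReal.ofReal (G w) ∂μ < ⊤ := by
      refine lt_of_le_of_lt (lintegral_mono fun w => Real.ofReal_le_enorm (G w)) ?_
      exact hGint.2
    rw [tsum_congr e1, e2]
    exact (lt_of_le_of_lt e3 e4).ne
  -- apply integral_tsum
  have h := integral_tsum hmeas hlin
  have hL : ∫ w, (∑' n : ℕ, f n w) ∂μ
      = ∫ w, w^(a-1) * (1-w)^(b-1) * (-Real.log (1-w)) ∂μ := by
    refine integral_congr_ae ?_
    rw [hμ]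
    refine (ae_restrict_iff' measurableSet_Ioo).2 (Filter.Eventually.of_forall fun w hw => ?_)
    exact (hsum w hw).tsum_eq
  rw [hL] at h
  have h2 : ∫ w, w^(a-1) * (1-w)^(b-1) * (-Real.log (1-w)) ∂μ
      = -∫ w, w^(a-1) * (1-w)^(b-1) * Real.log (1-w) ∂μ := by
    rw [← integral_neg]
    congr 1
    funext w
    ring
  rw [h2] at h
  have h3 : ∑' n : ℕ, ∫ w, f n w ∂μ = ∑' n : ℕ, betaF ((n:ℝ)+1+a) b / ((n:ℝ)+1) :=
    tsum_congr hint
  rw [h3] at h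
  rw [hμ] at h
  linarith [h]

lemma cov (g : ℝ → ℝ) : ∫ w in Set.Ioo (0:ℝ) 1, g w = ∫ x : ℝ, phi x * g (Phi x) := by
  have h := integral_image_eq_integral_abs_deriv_smul MeasurableSet.univ
    (fun x _ => (Phi_hasDerivAt x).hasDerivWithinAt) (Phi_strictMono.injective.injOn) g
  rw [Set.image_univ, Phi_range, Measure.restrict_univ] at h
  rw [h]
  congr 1
  funext x
  rw [abs_of_pos (phi_pos x), smul_eq_mul]

theorem bsn_elog_one_sub_Phi (a b : ℝ) (ha : 0 < a) (hb : 0 < b) :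
    ∫ x : ℝ, bsn a b x * Real.log (1 - Phi x) =
      -(1 / betaF a b) * ∑' n : ℕ, betaF ((n:ℝ) + 1 + a) b / ((n:ℝ) + 1) := by
  set g : ℝ → ℝ := fun w => w^(a-1) * (1-w)^(b-1) * Real.log (1-w) with hg
  have h1 : ∀ x : ℝ, bsn a b x * Real.log (1 - Phi x)
      = (1 / betaF a b) * (phi x * g (Phi x)) := by
    intro x
    rw [hg, bsn]
    simp only
    ring
  calc ∫ x : ℝ, bsn a b x * Real.log (1 - Phi x)
      = ∫ x : ℝ, (1 / betaF a b) * (phi x * g (Phi x)) := by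
        congr 1; funext x; exact h1 x
    _ = (1 / betaF a b) * ∫ x : ℝ, phi x * g (Phi x) := integral_const_mul _ _
    _ = (1 / betaF a b) * ∫ w in Set.Ioo (0:ℝ) 1, g w := by rw [cov]
    _ = (1 / betaF a b) * -∑' n : ℕ, betaF ((n:ℝ)+1+a) b / ((n:ℝ)+1) := by
        rw [hg, key_integral a b ha hb]
    _ = -(1 / betaF a b) * ∑' n : ℕ, betaF ((n:ℝ) + 1 + a) b / ((n:ℝ) + 1) := by ring
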